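/- arXiv:1702.05997 — 6 statements merged into one kernel-verified Lean document; each statement's English description precedes it below -/
import Mathlib

section
/- Noninfluence is equivalent to the conjunction of noninterference_r and nonleakage: noninfluence = (noninterference_r ∧ nonleakage). -/
open scoped Classical

universe u v w

variable {S : Type u} {E : Type v} {D : Type w}

def run (φ : E → Set (S × S)) : List E → Set (S × S)
  | [] => {p | p.2 = p.1}
  | e :: es => {p | ∃ m, (p.1, m) ∈ φ e ∧ (m, p.2) ∈ run φ es}

def execution (φ : E → Set (S × S)) (s : S) (es : List E) : Set S :=
  {t | (s, t) ∈ run φ es}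

def reachable (φ : E → Set (S × S)) (s0 : S) (s : S) : Prop :=
  ∃ es, (s0, s) ∈ run φ es

def sources (φ : E → Set (S × S)) (kdom : S → E → D) (intf : D → D → Prop) :
    List E → S → D → Set D
  | [], _, d => {d}
  | e :: es, s, d =>
      {w | ∃ s', (s, s') ∈ φ e ∧ w ∈ sources φ kdom intf es s' d} ∪
      {w | w = kdom s e ∧
        ∃ v s', intf w v ∧ (s, s') ∈ φ e ∧ v ∈ sources φ kdom intf es s' d}

noncomputable def ipurge (φ : E → Set (S × S)) (kdom : S → E → D)
    (intf : D → D → Prop) : List E → D → Set S → List E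
  | [], _, _ => []
  | e :: es, d, ss =>
      if ∃ s ∈ ss, kdom s e ∈ sources φ kdom intf (e :: es) s d then
        e :: ipurge φ kdom intf es d {s' | ∃ s ∈ ss, (s, s') ∈ φ e}
      else ipurge φ kdom intf es d ss

/-- observational equivalence: (s ⊳ es1) ≃d≃ (t ⊳ es2) -/
def obseq (φ : E → Set (S × S)) (vpeq : S → D → S → Prop)
    (s : S) (es1 : List E) (d : D) (t : S) (es2 : List E) : Prop :=
  ∀ s' ∈ execution φ s es1, ∀ t' ∈ execution φ t es2, vpeq s' d t'

/-- step consistent condition of event, with separate hypothesis/conclusion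
equivalence relations (used for the Δ-restricted variants). -/
def SCe2 (φ : E → Set (S × S)) (kdom : S → E → D) (intf : D → D → Prop)
    (vpeqH vpeqCon : S → D → S → Prop) (sched : D) (s0 : S) (e : E) : Prop :=
  ∀ d s t, reachable φ s0 s → reachable φ s0 t → vpeqH s d t → vpeqH s sched t →
    intf (kdom s e) d → vpeqH s (kdom s e) t →
    ∀ s' t', (s, s') ∈ φ e → (t, t') ∈ φ e → vpeqCon s' d t'

/-- locally respects condition of event. -/
def LRe2 (φ : E → Set (S × S)) (kdom : S → E → D) (intf : D → D → Prop)
    (vpeqCon : S → D → S → Prop) (s0 : S) (e : E) : Prop :=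
  ∀ d s s', reachable φ s0 s → ¬ intf (kdom s e) d → (s, s') ∈ φ e →
    vpeqCon s d s'

def SCe (φ : E → Set (S × S)) (kdom : S → E → D) (intf : D → D → Prop)
    (vpeq : S → D → S → Prop) (sched : D) (s0 : S) (e : E) : Prop :=
  SCe2 φ kdom intf vpeq vpeq sched s0 e

def LRe (φ : E → Set (S × S)) (kdom : S → E → D) (intf : D → D → Prop)
    (vpeq : S → D → S → Prop) (s0 : S) (e : E) : Prop :=
  LRe2 φ kdom intf vpeq s0 e

def noninfluence (φ : E → Set (S × S)) (kdom : S → E → D) (intf : D → D → Prop)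
    (vpeq : S → D → S → Prop) (sched : D) (s0 : S) : Prop :=
  ∀ d es s t, reachable φ s0 s → reachable φ s0 t → vpeq s sched t →
    (∀ u ∈ sources φ kdom intf es s d, vpeq s u t) →
    obseq φ vpeq s es d t (ipurge φ kdom intf es d {t})

def weak_noninfluence (φ : E → Set (S × S)) (kdom : S → E → D)
    (intf : D → D → Prop) (vpeq : S → D → S → Prop) (sched : D) (s0 : S) : Prop :=
  ∀ d es1 es2 s t, reachable φ s0 s → reachable φ s0 t →
    (∀ u ∈ sources φ kdom intf es1 s d, vpeq s u t) → vpeq s sched t →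
    ipurge φ kdom intf es1 d {s} = ipurge φ kdom intf es2 d {t} →
    obseq φ vpeq s es1 d t es2

def nonleakage (φ : E → Set (S × S)) (kdom : S → E → D) (intf : D → D → Prop)
    (vpeq : S → D → S → Prop) (sched : D) (s0 : S) : Prop :=
  ∀ d es s t, reachable φ s0 s → reachable φ s0 t → vpeq s sched t →
    (∀ u ∈ sources φ kdom intf es s d, vpeq s u t) →
    obseq φ vpeq s es d t es

def noninterference_r (φ : E → Set (S × S)) (kdom : S → E → D)
    (intf : D → D → Prop) (vpeq : S → D → S → Prop) (s0 : S) : Prop :=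
  ∀ d es s, reachable φ s0 s →
    obseq φ vpeq s es d s (ipurge φ kdom intf es d {s})

def noninterference (φ : E → Set (S × S)) (kdom : S → E → D)
    (intf : D → D → Prop) (vpeq : S → D → S → Prop) (s0 : S) : Prop :=
  ∀ d es, obseq φ vpeq s0 es d s0 (ipurge φ kdom intf es d {s0})

def weak_noninterference_r (φ : E → Set (S × S)) (kdom : S → E → D)
    (intf : D → D → Prop) (vpeq : S → D → S → Prop) (s0 : S) : Prop :=
  ∀ d es1 es2 s, reachable φ s0 s →
    ipurge φ kdom intf es1 d {s} = ipurge φ kdom intf es2 d {s} →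
    obseq φ vpeq s es1 d s es2

def weak_noninterference (φ : E → Set (S × S)) (kdom : S → E → D)
    (intf : D → D → Prop) (vpeq : S → D → S → Prop) (s0 : S) : Prop :=
  ∀ d es1 es2,
    ipurge φ kdom intf es1 d {s0} = ipurge φ kdom intf es2 d {s0} →
    obseq φ vpeq s0 es1 d s0 es2

lemma reachable_step {φ : E → Set (S × S)} {s0 s s' : S} {e : E}
    (h : reachable φ s0 s) (h' : (s, s') ∈ φ e) : reachable φ s0 s' := by
  obtain ⟨es, hes⟩ := h
  refine ⟨es ++ [e], ?_⟩
  induction es generalizing s0 with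
  | nil =>
    have : s = s0 := by simpa [run] using hes
    subst this
    exact ⟨s', h', by simp [run]⟩
  | cons a l ih =>
    obtain ⟨m, hm1, hm2⟩ := hes
    exact ⟨m, hm1, ih hm2⟩

lemma exec_nonempty {φ : E → Set (S × S)} {s0 : S}
    (henabled : ∀ s e, reachable φ s0 s → ∃ s', (s, s') ∈ φ e) :
    ∀ (es : List E) (s : S), reachable φ s0 s → ∃ t, t ∈ execution φ s es := by
  intro es
  induction es with
  | nil => intro s _; exact ⟨s, by simp [execution, run]⟩
  | cons e l ih =>
    intro s hs
    obtain ⟨m, hm⟩ := henabled s e hs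
    obtain ⟨t, ht⟩ := ih m (reachable_step hs hm)
    exact ⟨t, m, hm, ht⟩

/-- noninfluence = (noninterference_r ∧ nonleakage). -/
theorem noninfluence_iff
    (φ : E → Set (S × S)) (kdom : S → E → D) (intf : D → D → Prop)
    (vpeq : S → D → S → Prop) (sched : D) (s0 : S)
    (hequiv : ∀ d, Equivalence (fun s t => vpeq s d t))
    (hkdom : ∀ s t e, vpeq s sched t → kdom s e = kdom t e)
    (henabled : ∀ s e, reachable φ s0 s → ∃ s', (s, s') ∈ φ e)
    (hsched : ∀ d, intf sched d)
    (hsched' : ∀ d, intf d sched → d = sched) :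
    noninfluence φ kdom intf vpeq sched s0 ↔
      (noninterference_r φ kdom intf vpeq s0 ∧
       nonleakage φ kdom intf vpeq sched s0) := by
  constructor
  · intro hni
    have hnr : noninterference_r φ kdom intf vpeq s0 := by
      intro d es s hs
      exact hni d es s s hs hs ((hequiv sched).refl s)
        (fun u _ => (hequiv u).refl s)
    refine ⟨hnr, ?_⟩
    intro d es s t hs ht hst hsrc s' hs' t' ht'
    obtain ⟨t'', ht''⟩ := exec_nonempty henabled (ipurge φ kdom intf es d {t}) t ht
    have h1 : vpeq s' d t'' := hni d es s t hs ht hst hsrc s' hs' t'' ht''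
    have h2 : vpeq t' d t'' := hnr d es t ht t' ht' t'' ht''
    exact (hequiv d).trans h1 ((hequiv d).symm h2)
  · rintro ⟨hnr, hnl⟩ d es s t hs ht hst hsrc s' hs' t'' ht''
    obtain ⟨t', ht'⟩ := exec_nonempty henabled es t ht
    have h1 : vpeq s' d t' := hnl d es s t hs ht hst hsrc s' hs' t' ht'
    have h2 : vpeq t' d t'' := hnr d es t ht t' ht' t'' ht''
    exact (hequiv d).trans h1 h2
end

section
/- Soundness of refinement: if SK_A and SK_C are instances of the security model and SK_C refines SK_A via a state map Ψ and an event map Θ, then for every event sequence es at the concrete level, Ψ*(execution_C(s0C, es)) ⊆ execution_A(s0A, Θ*(es)), where Ψ* maps a set of concrete states pointwise through Ψ and Θ* maps a sequence of concrete events through Θ, with τ events deleted from the resulting abstract sequence. -/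
open scoped Classical

universe u v w

variable {S : Type u} {E : Type v} {D : Type w}

/-- soundness of refinement:
Ψ*(execution_C(s0C, es)) ⊆ execution_A(s0A, Θ*(es)), where Θ* deletes τ
(modelled by `Option.none`) from the event sequence. -/
theorem refinement_sound {SA SC : Type u} {EA EC : Type v}
    (φA : EA → Set (SA × SA)) (φC : EC → Set (SC × SC))
    (s0A : SA) (s0C : SC) (Ψ : SC → SA) (Θ : EC → Option EA)
    (hinit : Ψ s0C = s0A)
    (hsim : ∀ e ea s t, Θ e = some ea → (s, t) ∈ φC e →
      (Ψ s, Ψ t) ∈ φA ea)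
    (hstutter : ∀ e s t, Θ e = none → (s, t) ∈ φC e → Ψ t = Ψ s) :
    ∀ es : List EC,
      Ψ '' execution φC s0C es ⊆ execution φA s0A (es.filterMap Θ) := by
  have key : ∀ es : List EC, ∀ s t : SC, (s, t) ∈ run φC es →
      (Ψ s, Ψ t) ∈ run φA (es.filterMap Θ) := by
    intro es
    induction es with
    | nil =>
      intro s t h
      simp only [run, Set.mem_setOf_eq] at h ⊢
      rw [h]
      exact rfl
    | cons e es ih =>
      intro s t h
      obtain ⟨m, hm, hrest⟩ := h
      cases hΘ : Θ e with
      | none =>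
        simp only [List.filterMap_cons, hΘ]
        have := hstutter e s m hΘ hm
        have := ih m t hrest
        rwa [‹Ψ m = Ψ s›] at this
      | some ea =>
        simp only [List.filterMap_cons, hΘ]
        exact ⟨Ψ m, hsim e ea s m hΘ hm, ih m t hrest⟩
  intro es x hx
  obtain ⟨t, ht, rfl⟩ := hx
  have := key _ _ _ ht
  rwa [hinit] at this
end

section
/- Step consistent of event refinement: if SK_C refines SK_A via (Ψ, Θ), then for every concrete event e with Θ(e) ≠ τ, if SC_A(Θ(e)) holds at the abstract level and SC_{CΔ}(e) holds for the new state variables at the concrete level, then SC_C(e) holds at the concrete level. -/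
open scoped Classical

universe u v w

variable {S : Type u} {E : Type v} {D : Type w}

/-- step consistent of event refinement:
for a refined event e (Θ(e) = some ea), SC_A(ea) and SC_{CΔ}(e) imply
SC_C(e). -/
theorem refinement_SC_event {SA SC : Type u} {EA EC : Type v}
    (φA : EA → Set (SA × SA)) (φC : EC → Set (SC × SC))
    (s0A : SA) (s0C : SC) (Ψ : SC → SA) (Θ : EC → Option EA)
    (kdomA : SA → EA → D) (kdomC : SC → EC → D) (intf : D → D → Prop)
    (vpeqA : SA → D → SA → Prop) (vpeqC : SC → D → SC → Prop)
    (vpeqD : SC → D → SC → Prop) (sched : D)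
    (hinit : Ψ s0C = s0A)
    (hsim : ∀ e ea s t, Θ e = some ea → (s, t) ∈ φC e →
      (Ψ s, Ψ t) ∈ φA ea)
    (hstutter : ∀ e s t, Θ e = none → (s, t) ∈ φC e → Ψ t = Ψ s)
    (hkdom : ∀ e ea s, Θ e = some ea → kdomC s e = kdomA (Ψ s) ea)
    (hdecomp : ∀ s d t, vpeqC s d t ↔ (vpeqA (Ψ s) d (Ψ t) ∧ vpeqD s d t))
    (e : EC) (ea : EA) (hτ : Θ e = some ea)
    (hSCA : SCe2 φA kdomA intf vpeqA vpeqA sched s0A ea)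
    (hSCD : SCe2 φC kdomC intf vpeqC vpeqD sched s0C e) :
    SCe2 φC kdomC intf vpeqC vpeqC sched s0C e := by
  intro d s t hrs hrt hd hsched hintf hkd s' t' hs hg
  -- lift reachability
  have lift : ∀ es (a b : SC), (a, b) ∈ run φC es → ∃ esa, (Ψ a, Ψ b) ∈ run φA esa := by
    intro es
    induction es with
    | nil => intro a b h; exact ⟨[], by simpa [run] using congrArg Ψ h⟩
    | cons e' es ih =>
      intro a b h
      obtain ⟨m, hm1, hm2⟩ := h
      obtain ⟨esa, hesa⟩ := ih m b hm2
      cases hθ : Θ e' with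
      | none =>
        have := hstutter e' a m hθ hm1
        exact ⟨esa, by rwa [this] at hesa⟩
      | some ea' =>
        exact ⟨ea' :: esa, ⟨Ψ m, hsim e' ea' a m hθ hm1, hesa⟩⟩
  have hRA : ∀ x : SC, reachable φC s0C x → reachable φA s0A (Ψ x) := by
    rintro x ⟨es, hes⟩
    obtain ⟨esa, h⟩ := lift es s0C x hes
    exact ⟨esa, by rwa [hinit] at h⟩
  have hkd' := hkdom e ea s hτ
  have hA : vpeqA (Ψ s') d (Ψ t') := by
    refine hSCA d (Ψ s) (Ψ t) (hRA s hrs) (hRA t hrt) ((hdecomp s d t).mp hd).1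
      ((hdecomp s sched t).mp hsched).1 (by rwa [hkd'] at hintf)
      (by have := ((hdecomp s (kdomC s e) t).mp hkd).1; rwa [hkd'] at this)
      (Ψ s') (Ψ t') (hsim e ea s s' hτ hs) (hsim e ea t t' hτ hg)
  have hD : vpeqD s' d t' := hSCD d s t hrs hrt hd hsched hintf hkd s' t' hs hg
  exact (hdecomp s' d t').mpr ⟨hA, hD⟩
end

section
/- Locally respects of event refinement: if SK_C refines SK_A via (Ψ, Θ), then for every concrete event e with Θ(e) ≠ τ, if LR_A(Θ(e)) holds at the abstract level and LR_{CΔ}(e) holds for the new state variables, then LR_C(e) holds at the concrete level. -/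
open scoped Classical

universe u v w

variable {S : Type u} {E : Type v} {D : Type w}

theorem run_lift {SA SC : Type u} {EA EC : Type v}
    (φA : EA → Set (SA × SA)) (φC : EC → Set (SC × SC))
    (Ψ : SC → SA) (Θ : EC → Option EA)
    (hsim : ∀ e ea s t, Θ e = some ea → (s, t) ∈ φC e → (Ψ s, Ψ t) ∈ φA ea)
    (hstutter : ∀ e s t, Θ e = none → (s, t) ∈ φC e → Ψ t = Ψ s) :
    ∀ (es : List EC) (s t : SC), (s, t) ∈ run φC es →
      ∃ esa, (Ψ s, Ψ t) ∈ run φA esa := by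
  intro es
  induction es with
  | nil => intro s t h; exact ⟨[], by simpa [run] using congrArg Ψ h⟩
  | cons e es ih =>
    intro s t h
    obtain ⟨m, hm, hrest⟩ := h
    obtain ⟨esa, hesa⟩ := ih m t hrest
    cases hΘ : Θ e with
    | none => exact ⟨esa, by rwa [hstutter e s m hΘ hm] at hesa⟩
    | some ea => exact ⟨ea :: esa, ⟨Ψ m, hsim e ea s m hΘ hm, hesa⟩⟩

/-- locally respects of event refinement:
for a refined event e (Θ(e) = some ea), LR_A(ea) and LR_{CΔ}(e) imply
LR_C(e). -/
theorem refinement_LR_event {SA SC : Type u} {EA EC : Type v}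
    (φA : EA → Set (SA × SA)) (φC : EC → Set (SC × SC))
    (s0A : SA) (s0C : SC) (Ψ : SC → SA) (Θ : EC → Option EA)
    (kdomA : SA → EA → D) (kdomC : SC → EC → D) (intf : D → D → Prop)
    (vpeqA : SA → D → SA → Prop) (vpeqC : SC → D → SC → Prop)
    (vpeqD : SC → D → SC → Prop)
    (hinit : Ψ s0C = s0A)
    (hsim : ∀ e ea s t, Θ e = some ea → (s, t) ∈ φC e →
      (Ψ s, Ψ t) ∈ φA ea)
    (hstutter : ∀ e s t, Θ e = none → (s, t) ∈ φC e → Ψ t = Ψ s)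
    (hkdom : ∀ e ea s, Θ e = some ea → kdomC s e = kdomA (Ψ s) ea)
    (hdecomp : ∀ s d t, vpeqC s d t ↔ (vpeqA (Ψ s) d (Ψ t) ∧ vpeqD s d t))
    (e : EC) (ea : EA) (hτ : Θ e = some ea)
    (hLRA : LRe2 φA kdomA intf vpeqA s0A ea)
    (hLRD : LRe2 φC kdomC intf vpeqD s0C e) :
    LRe2 φC kdomC intf vpeqC s0C e := by
  intro d s s' hreach hni hstep
  have hreachA : reachable φA s0A (Ψ s) := by
    obtain ⟨es, hes⟩ := hreach
    obtain ⟨esa, hesa⟩ := run_lift φA φC Ψ Θ hsim hstutter es s0C s hes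
    exact ⟨esa, by rwa [hinit] at hesa⟩
  have hni' : ¬ intf (kdomA (Ψ s) ea) d := by rwa [hkdom e ea s hτ] at hni
  rw [hdecomp]
  exact ⟨hLRA d (Ψ s) (Ψ s') hreachA hni' (hsim e ea s s' hτ hstep),
    hLRD d s s' hreach hni hstep⟩
end

section
/- Step consistent of new events in refinement: if SK_C refines SK_A via (Ψ, Θ) and e is a new event (Θ(e) = τ) satisfying the step consistent condition on the new state variables SC_{CΔ}(e), then e satisfies the full concrete step consistent condition SC_C(e). -/
open scoped Classical

universe u v w

variable {S : Type u} {E : Type v} {D : Type w}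

/-- step consistent of new events in refinement:
for a new event e (Θ(e) = τ) satisfying SC_{CΔ}(e), SC_C(e) holds. -/
theorem refinement_SC_new_event {SA SC : Type u} {EA EC : Type v}
    (φA : EA → Set (SA × SA)) (φC : EC → Set (SC × SC))
    (s0A : SA) (s0C : SC) (Ψ : SC → SA) (Θ : EC → Option EA)
    (kdomC : SC → EC → D) (intf : D → D → Prop)
    (vpeqA : SA → D → SA → Prop) (vpeqC : SC → D → SC → Prop)
    (vpeqD : SC → D → SC → Prop) (sched : D)
    (hinit : Ψ s0C = s0A)
    (hstutter : ∀ e s t, Θ e = none → (s, t) ∈ φC e → Ψ t = Ψ s)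
    (hdecomp : ∀ s d t, vpeqC s d t ↔ (vpeqA (Ψ s) d (Ψ t) ∧ vpeqD s d t))
    (hequivA : ∀ d, Equivalence (fun s t => vpeqA s d t))
    (hequivD : ∀ d, Equivalence (fun s t => vpeqD s d t))
    (e : EC) (hτ : Θ e = none)
    (hSCD : SCe2 φC kdomC intf vpeqC vpeqD sched s0C e) :
    SCe2 φC kdomC intf vpeqC vpeqC sched s0C e := by
  intro d s t hrs hrt hH hsch hintf hk s' t' hs' ht'
  have hD := hSCD d s t hrs hrt hH hsch hintf hk s' t' hs' ht'
  have hA : vpeqA (Ψ s) d (Ψ t) := ((hdecomp s d t).mp hH).1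
  rw [hdecomp]
  refine ⟨?_, hD⟩
  rw [hstutter e s s' hτ hs', hstutter e t t' hτ ht']
  exact hA
end

section
/- Locally respects of new events in refinement: if SK_C refines SK_A via (Ψ, Θ) and e is a new event (Θ(e) = τ) satisfying the locally respects condition on the new state variables LR_{CΔ}(e), then e satisfies the full concrete locally respects condition LR_C(e). -/
open scoped Classical

universe u v w

variable {S : Type u} {E : Type v} {D : Type w}

/-- locally respects of new events in refinement:
for a new event e (Θ(e) = τ) satisfying LR_{CΔ}(e), LR_C(e) holds. -/
theorem refinement_LR_new_event {SA SC : Type u} {EA EC : Type v}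
    (φA : EA → Set (SA × SA)) (φC : EC → Set (SC × SC))
    (s0A : SA) (s0C : SC) (Ψ : SC → SA) (Θ : EC → Option EA)
    (kdomC : SC → EC → D) (intf : D → D → Prop)
    (vpeqA : SA → D → SA → Prop) (vpeqC : SC → D → SC → Prop)
    (vpeqD : SC → D → SC → Prop)
    (hinit : Ψ s0C = s0A)
    (hstutter : ∀ e s t, Θ e = none → (s, t) ∈ φC e → Ψ t = Ψ s)
    (hdecomp : ∀ s d t, vpeqC s d t ↔ (vpeqA (Ψ s) d (Ψ t) ∧ vpeqD s d t))
    (hreflA : ∀ s d, vpeqA s d s)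
    (e : EC) (hτ : Θ e = none)
    (hLRD : LRe2 φC kdomC intf vpeqD s0C e) :
    LRe2 φC kdomC intf vpeqC s0C e := by
  intro d s s' hr hni hst
  rw [hdecomp]
  exact ⟨by rw [hstutter e s s' hτ hst]; exact hreflA _ _, hLRD d s s' hr hni hst⟩
end
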